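/- Every multiple-labelled network realizing a ploidy profile m can be transformed by a finite sequence of split operations into a multiple-labelled tree realizing m. -/

import Mathlib

/-!
Formalization preamble for "Autopolyploidy, allopolyploidy, and phylogenetic
networks with horizontal arcs" (Huber & Maher).

Networks are finite directed multigraphs whose vertices and arcs are (finitely
many) natural numbers; parallel arcs (beads) are allowed, loops are not.
-/

namespace Ploidy

/-- A finite directed multigraph: both vertex names and arc identifiers are
natural numbers; `src`/`tgt` give the endpoints of each arc. -/
structure Net where
  verts : Finset ℕ
  arcs : Finset ℕ
  src : ℕ → ℕ
  tgt : ℕ → ℕ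

/-- The indegree of a vertex. -/
def inDeg (G : Net) (v : ℕ) : ℕ := (G.arcs.filter fun a => G.tgt a = v).card

/-- The outdegree of a vertex. -/
def outDeg (G : Net) (v : ℕ) : ℕ := (G.arcs.filter fun a => G.src a = v).card

def IsLeafN (G : Net) (v : ℕ) : Prop := v ∈ G.verts ∧ inDeg G v = 1 ∧ outDeg G v = 0
def IsTreeVert (G : Net) (v : ℕ) : Prop := v ∈ G.verts ∧ inDeg G v = 1 ∧ outDeg G v = 2
def IsReticN (G : Net) (v : ℕ) : Prop := v ∈ G.verts ∧ inDeg G v = 2 ∧ outDeg G v = 1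
def IsRootN (G : Net) (v : ℕ) : Prop := v ∈ G.verts ∧ inDeg G v = 0

instance (G : Net) (v : ℕ) : Decidable (IsLeafN G v) :=
  decidable_of_iff (v ∈ G.verts ∧ inDeg G v = 1 ∧ outDeg G v = 0) Iff.rfl

/-- `IsWalk G l u v`: the list of arcs `l` forms a directed walk from `u` to `v`. -/
def IsWalk (G : Net) : List ℕ → ℕ → ℕ → Prop
  | [], u, v => u = v ∧ u ∈ G.verts
  | a :: l, u, v => a ∈ G.arcs ∧ G.src a = u ∧ IsWalk G l (G.tgt a) v

/-- The number of directed paths from `u` to `v` (in a DAG every directed walk is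
a path, and there are finitely many of them). -/
noncomputable def nPaths (G : Net) (u v : ℕ) : ℕ := Set.ncard {l : List ℕ | IsWalk G l u v}

/-- `a` is an arc from `u` to `v`. -/
def ArcFT (G : Net) (a u v : ℕ) : Prop := a ∈ G.arcs ∧ G.src a = u ∧ G.tgt a = v

/-- `u` is a parent of `v`. -/
def IsParent (G : Net) (u v : ℕ) : Prop := ∃ a, ArcFT G a u v

/-- `w` is below `u` (reachable from `u` by a directed walk, possibly `u = w`). -/
def BelowV (G : Net) (u w : ℕ) : Prop := ∃ l, IsWalk G l u w

/-- `v` is an end vertex of a pair of parallel arcs (a bead). -/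
def InBead (G : Net) (v : ℕ) : Prop :=
  ∃ a b, a ∈ G.arcs ∧ b ∈ G.arcs ∧ a ≠ b ∧ G.src a = G.src b ∧ G.tgt a = G.tgt b ∧
    (G.src a = v ∨ G.tgt a = v)

/-- `G` is beadless: there is no pair of parallel arcs. -/
def Beadless (G : Net) : Prop := ∀ v, ¬ InBead G v

/-- `G` is a (rooted, binary) phylogenetic network in the sense of Huber–Maher:
a rooted DAG, possibly with beads but without loops, with a unique root of
indegree 0 and outdegree 2, all of whose other vertices are leaves, tree
vertices or reticulation vertices. -/
structure IsPhylo (G : Net) : Prop where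
  src_mem : ∀ a ∈ G.arcs, G.src a ∈ G.verts
  tgt_mem : ∀ a ∈ G.arcs, G.tgt a ∈ G.verts
  no_loop : ∀ a ∈ G.arcs, G.src a ≠ G.tgt a
  acyclic : ∀ (v : ℕ) (l : List ℕ), l ≠ [] → ¬ IsWalk G l v v
  root_exu : ∃! r, IsRootN G r
  root_out : ∀ r, IsRootN G r → outDeg G r = 2
  types : ∀ v ∈ G.verts, IsRootN G v ∨ IsLeafN G v ∨ IsTreeVert G v ∨ IsReticN G v

/-- An HGT-consistent labelling: (P1), (P2) and (P3) (the latter required only for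
reticulation vertices not contained in beads). -/
def IsHGT (G : Net) (t : ℕ → ℝ) : Prop :=
  (∀ v ∈ G.verts, 0 ≤ t v) ∧
  (∀ a ∈ G.arcs,
      (IsReticN G (G.tgt a) → t (G.src a) ≤ t (G.tgt a)) ∧
      (¬ IsReticN G (G.tgt a) → t (G.src a) < t (G.tgt a))) ∧
  (∀ u ∈ G.verts, ¬ IsLeafN G u → ∃ v, IsParent G u v ∧ t u < t v) ∧
  (∀ v, IsReticN G v → ¬ InBead G v → ∃! u, IsParent G u v ∧ t u = t v)

/-- `v` is a reticulation vertex (not contained in a bead) violating (P3). -/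
def ViolatesP3 (G : Net) (t : ℕ → ℝ) (v : ℕ) : Prop :=
  IsReticN G v ∧ ¬ InBead G v ∧ ¬ (∃! u, IsParent G u v ∧ t u = t v)

/-- A weak HGT-consistent labelling: (P1), (P2) and (P3'): at most one reticulation
vertex `v`, with distinct parents `u₁, u₂` such that `u₂` is below `u₁` and
`t u₁ ≠ t v ≠ t u₂`, violates (P3). -/
def IsWeakHGT (G : Net) (t : ℕ → ℝ) : Prop :=
  (∀ v ∈ G.verts, 0 ≤ t v) ∧
  (∀ a ∈ G.arcs,
      (IsReticN G (G.tgt a) → t (G.src a) ≤ t (G.tgt a)) ∧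
      (¬ IsReticN G (G.tgt a) → t (G.src a) < t (G.tgt a))) ∧
  (∀ u ∈ G.verts, ¬ IsLeafN G u → ∃ v, IsParent G u v ∧ t u < t v) ∧
  (∀ v w, ViolatesP3 G t v → ViolatesP3 G t w → v = w) ∧
  (∀ v, ViolatesP3 G t v →
      ∃ u1 u2, u1 ≠ u2 ∧ IsParent G u1 v ∧ IsParent G u2 v ∧ BelowV G u1 u2 ∧
        t u1 ≠ t v ∧ t u2 ≠ t v)

/-! ### Ploidy profiles and the simplification sequence -/

/-- A ploidy profile: a nonempty descending list of positive integers; the entry at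
(0-based) position `i` is indexed by the taxon `x_{i+1}`. -/
def IsProfileL (l : List ℕ) : Prop := l ≠ [] ∧ l.Pairwise (· ≥ ·) ∧ ∀ x ∈ l, 1 ≤ x

/-- A simple ploidy profile: first component at least 2, all other components 1. -/
def IsSimpleP (l : List ℕ) : Prop := l ≠ [] ∧ 2 ≤ l.headI ∧ ∀ x ∈ l.tail, x = 1

/-- A strictly simple ploidy profile. -/
def IsStrictlySimpleP (l : List ℕ) : Prop := IsSimpleP l ∧ l.length = 1

/-- Insert `x` into a descending list, directly after the last occurrence of the
value `x` (i.e. after all entries `≥ x`). -/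
def insertDesc (x : ℕ) : List ℕ → List ℕ
  | [] => [x]
  | y :: ys => if x ≤ y then y :: insertDesc x ys else x :: y :: ys

/-- One step of the simplification process for ploidy profiles; simple profiles are
fixed points.  With `α = m₁ - m₂`: if `α = 0` delete `m₁`; if `α > m₂` replace `m₁`
by `α`; if `0 < α ≤ m₂` delete `m₁` and insert `α` directly after the last
occurrence of the value `α`. -/
def simpStep (l : List ℕ) : List ℕ :=
  if 2 ≤ l.headI ∧ ∀ x ∈ l.tail, x = 1 then l
  else
    match l with
    | m1 :: m2 :: rest =>
        if m1 = m2 then m2 :: rest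
        else if m2 < m1 - m2 then (m1 - m2) :: m2 :: rest
        else insertDesc (m1 - m2) (m2 :: rest)
    | _ => l

/-- `mt` is the (simple) terminal element of the simplification sequence of `m`. -/
def IsTerminal (m mt : List ℕ) : Prop := IsSimpleP mt ∧ ∃ k, simpStep^[k] m = mt

/-- A practical ploidy profile: simple but not strictly simple, or `(2^l)`, `l ≥ 1`. -/
def Practical (l : List ℕ) : Prop :=
  (IsSimpleP l ∧ 2 ≤ l.length) ∨ (l.length = 1 ∧ ∃ j, 1 ≤ j ∧ l.headI = 2 ^ j)

/-- An arc-rich (strictly simple) ploidy profile: the binary representation of its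
single component has dimension at least two. -/
def ArcRich (l : List ℕ) : Prop :=
  l.length = 1 ∧ 2 ≤ l.headI ∧ 2 ≤ (Nat.bits l.headI).count true

/-! ### Realizations of ploidy profiles -/

/-- A network together with an indexing of its leaves by the positions of a
ploidy profile. -/
structure LNet where
  net : Net
  leaf : ℕ → ℕ

/-- `R` is a phylogenetic network realizing the ploidy profile `m`: the leaves of
`R.net` are bijectively indexed by the positions of `m` and, for every `i`, the
number of directed paths from the root to the leaf `R.leaf i` is the `i`-th
component of `m`. -/
def RealizesL (R : LNet) (m : List ℕ) : Prop :=
  IsPhylo R.net ∧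
  (∀ i < m.length, IsLeafN R.net (R.leaf i)) ∧
  (∀ i j, i < m.length → j < m.length → R.leaf i = R.leaf j → i = j) ∧
  (∀ v, IsLeafN R.net v → ∃ i < m.length, R.leaf i = v) ∧
  (∀ i < m.length, ∀ r, IsRootN R.net r → nPaths R.net r (R.leaf i) = m.getD i 0)

/-! ### Concrete constructions: bead chains and the core network `B(m)` -/

/-- Build a network from a list of arcs (as (source, target) pairs); arc
identifiers are positions in the list, so repeated pairs yield beads. -/
def mkNet (l : List (ℕ × ℕ)) : Net where
  verts := (l.map Prod.fst ++ l.map Prod.snd).toFinset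
  arcs := Finset.range l.length
  src := fun i => (l.getD i (0, 0)).1
  tgt := fun i => (l.getD i (0, 0)).2

/-- The chain `B(l)` of `l` beads with a pendant leaf: vertex `2*j` is the tree
vertex of the `(j+1)`-st bead, `2*j+1` its reticulation vertex `h_{j+1}`, there is
an arc from `h_j` to the tree vertex of the next bead, and `2*l` is the pendant
leaf `x₁` attached by the arc `(h_l, x₁)`. -/
def beadChain (l : ℕ) : Net :=
  mkNet ((List.range l).flatMap fun j => [(2*j, 2*j+1), (2*j, 2*j+1), (2*j+1, 2*j+2)])

/-- The decreasing list `(i₁, …, i_k)` of exponents of the binary representation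
of `m₁`. -/
def expList (m1 : ℕ) : List ℕ :=
  ((List.range (m1+1)).filter fun j => m1.testBit j).reverse

/-- First vertex code available for the leaves `x_2, …, x_n` in `BNet`. -/
def xBase (m1 : ℕ) : ℕ := 2 * (expList m1).headI + 2 * (expList m1).length + 10

/-- The arcs of the core network `B(m)` for the simple profile `(m₁, 1, …, 1)` on
`n` taxa: a chain of `i₁` beads with pendant leaf `x₁ = 0` (root is the vertex
`2`), one root arc subdivided by `s_k` and, for `2 ≤ j ≤ k`, an arc `(s_j, s_j')`
where `s_j'` subdivides the outgoing arc of the reticulation vertex having exactly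
`i_j` reticulation vertices strictly below it and `s_2, …, s_{k-1}` subdivide the
arc `(s_k, s_k')`; if `n ≥ 2` a caterpillar tree on the leaves `x_2, …, x_n`
(codes `xBase m₁ + i`) is attached via a subdivision vertex `w` (placed on a root
arc if `k = 1`, on `(s_k, s_k')` if `k = 2`, and on `(s_{k-1}, s_k')` if `k ≥ 3`). -/
def BArcs (m1 n : ℕ) : List (ℕ × ℕ) :=
  let E := expList m1
  let k := E.length
  let i1 := E.headI
  let hv : ℕ → ℕ := fun j => 2*j + 1
  let tv : ℕ → ℕ := fun j => 2*j
  let nxt : ℕ → ℕ := fun j => if j = i1 then 0 else 2*j + 2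
  let S' : ℕ → ℕ := fun j => 2*i1 + 2 + j
  let P : ℕ → ℕ := fun j => 2*i1 + k + 2 + j
  let w : ℕ := 2*i1 + 2*k + 4
  let L : ℕ := 2*i1 + 2*k + 10
  let x : ℕ → ℕ := fun i => L + i
  let cv : ℕ → ℕ := fun i => L + n + i
  let r : ℕ → ℕ := fun t => i1 - E.getD (t-1) 0
  let rootArcs : List (ℕ × ℕ) :=
    if 2 ≤ k then [(tv 1, hv 1), (tv 1, P k), (P k, hv 1)]
    else if 2 ≤ n then [(tv 1, hv 1), (tv 1, w), (w, hv 1)]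
    else [(tv 1, hv 1), (tv 1, hv 1)]
  let otherBeads : List (ℕ × ℕ) :=
    (List.range' 2 (i1 - 1)).flatMap fun j => [(tv j, hv j), (tv j, hv j)]
  let chainArcs : List (ℕ × ℕ) :=
    (List.range' 1 i1).flatMap fun j =>
      match (List.range' 2 (k-1)).find? (fun t => r t == j) with
      | some t => [(hv j, S' t), (S' t, nxt j)]
      | none => [(hv j, nxt j)]
  let sChain : List ℕ :=
    [P k] ++ (List.range' 2 (k-2)).map P ++ (if 2 ≤ n then [w] else []) ++ [S' k]
  let sArcs : List (ℕ × ℕ) :=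
    if 2 ≤ k then (sChain.zip sChain.tail) ++ (List.range' 2 (k-2)).map (fun j => (P j, S' j))
    else []
  let catArcs : List (ℕ × ℕ) :=
    if n ≤ 1 then []
    else if n = 2 then [(w, x 2)]
    else [(w, cv 2)] ++
      ((List.range' 2 (n-3)).flatMap fun i => [(cv i, x i), (cv i, cv (i+1))]) ++
      [(cv (n-1), x (n-1)), (cv (n-1), x n)]
  rootArcs ++ otherBeads ++ chainArcs ++ sArcs ++ catArcs

/-- The core network `B(m)` for a simple profile with first component `m1` on `n`
taxa. -/
def BNet (m1 n : ℕ) : Net := mkNet (BArcs m1 n)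

/-- The core network `B(m)` of a ploidy profile whose terminal element is `mt`,
together with its leaf indexing (leaf `0` is `x₁ = 0`, leaf `i` is `x_{i+1}`). -/
def BLNet (mt : List ℕ) : LNet where
  net := BNet mt.headI mt.length
  leaf := fun i => if i = 0 then 0 else xBase mt.headI + (i + 1)

/-- The naive realization of the simple profile `(m₁, 1, …, 1)` on `n` taxa: a
directed path `0, 1, …, n + 2m₁ - 3` (with `v_j = j - 1`, `w_i = m₁ + i - 3`,
`v_j' = n + 2m₁ - 3 - j` and `x₁ = n + 2m₁ - 3`) together with the arcs
`(v_j, v_j')` and the pendant leaf arcs `(w_i, x_i)` with `x_i = n + 2m₁ + i`. -/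
def naiveNet (m1 n : ℕ) : Net :=
  mkNet (((List.range (n + 2*m1 - 3)).map fun p => (p, p+1)) ++
    ((List.range' 1 (m1 - 1)).map fun j => (j - 1, n + 2*m1 - 3 - j)) ++
    ((List.range' 2 (n - 1)).map fun i => (m1 + i - 3, n + 2*m1 + i)))

/-! ### Cherry modification operations -/

/-- `reduce(a,b)`: delete the leaf `b` of the cherry `{a,b}` together with its
incoming arc and suppress the resulting degree-two vertex (collapsing the network
to the single vertex `a` when the common parent is the root). -/
def ReduceOp (G G' : Net) : Prop :=
  ∃ a b p ea eb, a ≠ b ∧ IsLeafN G a ∧ IsLeafN G b ∧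
    ArcFT G ea p a ∧ ArcFT G eb p b ∧ ea ≠ eb ∧
    G'.verts = (G.verts.erase b).erase p ∧
    G'.arcs = (G.arcs.erase eb).erase ea ∧
    ((IsRootN G p ∧ ∀ e ∈ G'.arcs, G'.src e = G.src e ∧ G'.tgt e = G.tgt e) ∨
     (∃ ep q, ArcFT G ep q p ∧
        (∀ e ∈ G'.arcs, e ≠ ep → G'.src e = G.src e ∧ G'.tgt e = G.tgt e) ∧
        G'.src ep = q ∧ G'.tgt ep = a))

/-- `cut(a,b)`: delete the reticulation arc of the reticulate cherry `{a,b}` with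
reticulation leaf `b`, suppressing the two resulting degree-two vertices. -/
def CutOp (G G' : Net) : Prop :=
  ∃ a b pa pb e1 e2 e3 e4 e5 q r,
    a ≠ b ∧ IsLeafN G a ∧ IsLeafN G b ∧ IsReticN G pb ∧
    ArcFT G e1 pa a ∧ ArcFT G e2 pb b ∧ ArcFT G e3 pa pb ∧
    ArcFT G e4 q pb ∧ e3 ≠ e4 ∧ ArcFT G e5 r pa ∧
    G'.verts = (G.verts.erase pa).erase pb ∧
    G'.arcs = ((G.arcs.erase e3).erase e1).erase e2 ∧
    (∀ e ∈ G'.arcs, e ≠ e4 → e ≠ e5 → G'.src e = G.src e ∧ G'.tgt e = G.tgt e) ∧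
    G'.src e5 = r ∧ G'.tgt e5 = a ∧
    G'.src e4 = q ∧ G'.tgt e4 = b

/-- `simp(a)`: for a type-1 degenerate cherry `{a}` (sole leaf whose parent is the
reticulation vertex of a bead), delete one arc of the bead, suppressing the
resulting degree-two vertex and collapsing the outgoing arc of the tree vertex of
the bead. -/
def SimpOp (G G' : Net) : Prop :=
  ∃ a h u e1 e2 e3,
    IsLeafN G a ∧ (∀ w, IsLeafN G w → w = a) ∧ IsReticN G h ∧
    ArcFT G e1 u h ∧ ArcFT G e2 u h ∧ e1 ≠ e2 ∧ ArcFT G e3 h a ∧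
    ((IsRootN G u ∧ G'.verts = {a} ∧ G'.arcs = ∅) ∨
     (∃ eu q, ArcFT G eu q u ∧
        G'.verts = (G.verts.erase h).erase u ∧
        G'.arcs = ((G.arcs.erase e2).erase e3).erase e1 ∧
        (∀ e ∈ G'.arcs, e ≠ eu → G'.src e = G.src e ∧ G'.tgt e = G.tgt e) ∧
        G'.src eu = q ∧ G'.tgt eu = a))

/-- `trim(a)`: for a type-2 degenerate cherry `{a}` (sole leaf whose parent `p` is
a reticulation vertex with distinct parents `q₁, q₂`), delete the arc `(q₁,p)`
(case (a): there is a vertex `q` with arcs `(q,q₁)`, `(q,q₂)`, `(q₁,q₂)`),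
respectively one of the two parallel arcs from `q` to `q₂` (case (b): there is an
arc `(q₁,q)` and a pair of parallel arcs from `q` to `q₂`), suppressing the two
resulting degree-two vertices. -/
def TrimOp (G G' : Net) : Prop :=
  ∃ a p g0, IsLeafN G a ∧ (∀ w, IsLeafN G w → w = a) ∧ IsReticN G p ∧ ArcFT G g0 p a ∧
   ((∃ q q1 q2 f1 f2 f3 g1 g2,
      ArcFT G g1 q1 p ∧ ArcFT G g2 q2 p ∧ g1 ≠ g2 ∧ q1 ≠ q2 ∧
      ArcFT G f1 q q1 ∧ ArcFT G f2 q q2 ∧ ArcFT G f3 q1 q2 ∧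
      G'.verts = (G.verts.erase q1).erase p ∧
      G'.arcs = ((G.arcs.erase g1).erase f3).erase g0 ∧
      (∀ e ∈ G'.arcs, e ≠ f1 → e ≠ g2 → G'.src e = G.src e ∧ G'.tgt e = G.tgt e) ∧
      G'.src f1 = q ∧ G'.tgt f1 = q2 ∧
      G'.src g2 = q2 ∧ G'.tgt g2 = a) ∨
    (∃ q q1 q2 eq' f1 f2 g1 g2,
      ArcFT G g1 q1 p ∧ ArcFT G g2 q2 p ∧ g1 ≠ g2 ∧ q1 ≠ q2 ∧
      ArcFT G eq' q1 q ∧ ArcFT G f1 q q2 ∧ ArcFT G f2 q q2 ∧ f1 ≠ f2 ∧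
      G'.verts = (G.verts.erase q).erase q2 ∧
      G'.arcs = ((G.arcs.erase f2).erase f1).erase g2 ∧
      (∀ e ∈ G'.arcs, e ≠ eq' → G'.src e = G.src e ∧ G'.tgt e = G.tgt e) ∧
      G'.src eq' = q1 ∧ G'.tgt eq' = p))

/-- A single cherry modification operation: reduce, cut or simp. -/
def CherryModOp (G G' : Net) : Prop := ReduceOp G G' ∨ CutOp G G' ∨ SimpOp G G'

/-- A single weak cherry modification operation: reduce, cut, simp or trim. -/
def WeakCherryModOp (G G' : Net) : Prop := CherryModOp G G' ∨ TrimOp G G'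

/-- The network consisting of a single vertex (and no arcs). -/
def IsSingleV (G : Net) : Prop := ∃ v, G.verts = {v} ∧ G.arcs = ∅

/-- `G` admits a complete cherry modification sequence, i.e. `G` is an orchard. -/
def IsOrchardN (G : Net) : Prop :=
  ∃ G', Relation.ReflTransGen CherryModOp G G' ∧ IsSingleV G'

/-- `G` admits a complete weak cherry modification sequence, i.e. `G` is a weak
orchard. -/
def IsWeakOrchardN (G : Net) : Prop :=
  ∃ G', Relation.ReflTransGen WeakCherryModOp G G' ∧ IsSingleV G'

/-! ### The traceback through the simplification sequence -/

/-- Traceback step in case `α = 0`: replace the leaf indexing the first component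
of `m''` by a cherry on two new leaves. -/
def CherryExpandOp (R'' R' : LNet) : Prop :=
  ∃ y1 y2 b1 b2,
    y1 ∉ R''.net.verts ∧ y2 ∉ R''.net.verts ∧ y1 ≠ y2 ∧
    b1 ∉ R''.net.arcs ∧ b2 ∉ R''.net.arcs ∧ b1 ≠ b2 ∧
    R'.net.verts = R''.net.verts ∪ {y1, y2} ∧
    R'.net.arcs = R''.net.arcs ∪ {b1, b2} ∧
    (∀ a ∈ R''.net.arcs, R'.net.src a = R''.net.src a ∧ R'.net.tgt a = R''.net.tgt a) ∧
    R'.net.src b1 = R''.leaf 0 ∧ R'.net.tgt b1 = y1 ∧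
    R'.net.src b2 = R''.leaf 0 ∧ R'.net.tgt b2 = y2 ∧
    R'.leaf 0 = y1 ∧ R'.leaf 1 = y2 ∧ (∀ i, 1 ≤ i → R'.leaf (i + 1) = R''.leaf i)

/-- Traceback step in case `α > m₂'`: subdivide the incoming arcs of the leaves
indexing the first and second components of `m''` by new vertices `u` and `v` and
add the arc `(v,u)`. -/
def AddArcOp (R'' R' : LNet) : Prop :=
  ∃ u v a0 a1 b0 b1 c,
    u ∉ R''.net.verts ∧ v ∉ R''.net.verts ∧ u ≠ v ∧
    a0 ∈ R''.net.arcs ∧ R''.net.tgt a0 = R''.leaf 0 ∧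
    a1 ∈ R''.net.arcs ∧ R''.net.tgt a1 = R''.leaf 1 ∧ a0 ≠ a1 ∧
    b0 ∉ R''.net.arcs ∧ b1 ∉ R''.net.arcs ∧ c ∉ R''.net.arcs ∧
    b0 ≠ b1 ∧ b0 ≠ c ∧ b1 ≠ c ∧
    R'.net.verts = R''.net.verts ∪ {u, v} ∧
    R'.net.arcs = R''.net.arcs ∪ {b0, b1, c} ∧
    (∀ a ∈ R''.net.arcs, a ≠ a0 → a ≠ a1 →
        R'.net.src a = R''.net.src a ∧ R'.net.tgt a = R''.net.tgt a) ∧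
    R'.net.src a0 = R''.net.src a0 ∧ R'.net.tgt a0 = u ∧
    R'.net.src a1 = R''.net.src a1 ∧ R'.net.tgt a1 = v ∧
    R'.net.src b0 = u ∧ R'.net.tgt b0 = R''.leaf 0 ∧
    R'.net.src b1 = v ∧ R'.net.tgt b1 = R''.leaf 1 ∧
    R'.net.src c = v ∧ R'.net.tgt c = u ∧
    (∀ i, R'.leaf i = R''.leaf i)

/-- Traceback step in case `0 < α ≤ m₂'`, where the inserted component `α` sits at
(0-based) position `j` of `m''`: subdivide the incoming arc of the leaf indexing
`α` by a vertex `v`, replace the leaf indexing the first component of `m''` by a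
cherry, subdivide the incoming arc of one of the two new cherry leaves by a vertex
`u`, add the arc `(v,u)` and delete the leaf indexing `α` together with its
incoming arc, suppressing the resulting degree-two vertex. -/
def InsertBackOp (j : ℕ) (R'' R' : LNet) : Prop :=
  ∃ u y1 y2 c1 c2 c3 az,
    u ∉ R''.net.verts ∧ y1 ∉ R''.net.verts ∧ y2 ∉ R''.net.verts ∧
    u ≠ y1 ∧ u ≠ y2 ∧ y1 ≠ y2 ∧
    c1 ∉ R''.net.arcs ∧ c2 ∉ R''.net.arcs ∧ c3 ∉ R''.net.arcs ∧
    c1 ≠ c2 ∧ c1 ≠ c3 ∧ c2 ≠ c3 ∧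
    az ∈ R''.net.arcs ∧ R''.net.tgt az = R''.leaf j ∧
    R'.net.verts = (R''.net.verts.erase (R''.leaf j)) ∪ {u, y1, y2} ∧
    R'.net.arcs = R''.net.arcs ∪ {c1, c2, c3} ∧
    (∀ a ∈ R''.net.arcs, a ≠ az →
        R'.net.src a = R''.net.src a ∧ R'.net.tgt a = R''.net.tgt a) ∧
    R'.net.src az = R''.net.src az ∧ R'.net.tgt az = u ∧
    R'.net.src c1 = R''.leaf 0 ∧ R'.net.tgt c1 = u ∧
    R'.net.src c2 = u ∧ R'.net.tgt c2 = y1 ∧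
    R'.net.src c3 = R''.leaf 0 ∧ R'.net.tgt c3 = y2 ∧
    R'.leaf 0 = y1 ∧ R'.leaf 1 = y2 ∧
    (∀ i, 1 ≤ i → i < j → R'.leaf (i + 1) = R''.leaf i) ∧
    (∀ i, j < i → R'.leaf i = R''.leaf i)

/-- One step of the traceback: `R'` is a realization of the non-simple profile `m'`
obtained from the realization `R''` of `simpStep m'` by the surgery dictated by the
case (`α = 0`, `α > m₂'` or `0 < α ≤ m₂'`) that produced `simpStep m'` from `m'`. -/
def TraceStep (m' : List ℕ) (R'' R' : LNet) : Prop :=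
  2 ≤ m'.length ∧ ¬ IsSimpleP m' ∧
  ((m'.headI = m'.tail.headI ∧ CherryExpandOp R'' R') ∨
   (m'.tail.headI < m'.headI - m'.tail.headI ∧ AddArcOp R'' R') ∨
   (0 < m'.headI - m'.tail.headI ∧ m'.headI - m'.tail.headI ≤ m'.tail.headI ∧
     InsertBackOp
       ((m'.tail.takeWhile fun y => decide (m'.headI - m'.tail.headI ≤ y)).length)
       R'' R'))

/-- `TracebackFrom core m N`: `N` is a network `N(m)` obtainable by the traceback
through the simplification sequence of `m`, initialized with the core network
`core`. -/
inductive TracebackFrom (core : LNet) : List ℕ → LNet → Prop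
  | base (m : List ℕ) : IsSimpleP m → TracebackFrom core m core
  | step (m' : List ℕ) (R'' R' : LNet) :
      TracebackFrom core (simpStep m') R'' → TraceStep m' R'' R' →
      TracebackFrom core m' R'

/-! ### Tree-based and tree-child networks -/

def subIn (G : Net) (A : Finset ℕ) (v : ℕ) : ℕ := (A.filter fun a => G.tgt a = v).card
def subOut (G : Net) (A : Finset ℕ) (v : ℕ) : ℕ := (A.filter fun a => G.src a = v).card

/-- `G` is tree-based: some subset `A` of its arcs forms a spanning subdivision of a
rooted phylogenetic tree (with one extra incoming arc added to its root) whose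
leaves are exactly the leaves of `G`; all remaining arcs of `G` join subdivision
vertices, and every subdivision vertex has total degree 3 in `G`. -/
def IsTreeBased (G : Net) : Prop :=
  ∃ A : Finset ℕ, A ⊆ G.arcs ∧
    (∃! r, r ∈ G.verts ∧ subIn G A r = 0) ∧
    (∀ r ∈ G.verts, subIn G A r = 0 → subOut G A r = 1) ∧
    (∀ v ∈ G.verts,
        (subIn G A v = 0 ∧ subOut G A v = 1) ∨ (subIn G A v = 1 ∧ subOut G A v = 0) ∨
        (subIn G A v = 1 ∧ subOut G A v = 1) ∨ (subIn G A v = 1 ∧ subOut G A v = 2)) ∧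
    (∀ v ∈ G.verts, subIn G A v = 1 → subOut G A v = 0 → IsLeafN G v) ∧
    (∀ v, IsLeafN G v → subIn G A v = 1 ∧ subOut G A v = 0) ∧
    (∀ a ∈ G.arcs, a ∉ A →
        subIn G A (G.src a) = 1 ∧ subOut G A (G.src a) = 1 ∧
        subIn G A (G.tgt a) = 1 ∧ subOut G A (G.tgt a) = 1) ∧
    (∀ v ∈ G.verts, subIn G A v = 1 → subOut G A v = 1 → inDeg G v + outDeg G v = 3)

/-- `G` is tree-child (reticulation vertices contained in beads being ignored):
every vertex has a directed path to a leaf on which every vertex except possibly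
the first one is either not a reticulation vertex or is contained in a bead. -/
def IsTreeChild (G : Net) : Prop :=
  ∀ v ∈ G.verts, ∃ (l : List ℕ) (w : ℕ), IsWalk G l v w ∧ IsLeafN G w ∧
    ∀ a ∈ l, IsReticN G (G.tgt a) → InBead G (G.tgt a)

/-! ### Multiple-labelled networks and the split operation -/

/-- A multiple-labelled network: a network together with a labelling map assigning
to each leaf vertex the (0-based) position of the profile component it is labelled
with; distinct leaves may carry the same label. -/
structure MLNet where
  net : Net
  lab : ℕ → ℕ

/-- A multiple-labelled tree: a multiple-labelled network without reticulation
vertices. -/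
def IsMLTree (R : MLNet) : Prop := ∀ v, ¬ IsReticN R.net v

/-- The multiple-labelled network `R` realizes the ploidy profile `m`: for every
position `i` of `m`, the total number of directed paths from the root to leaves
labelled `i` equals the `i`-th component of `m`. -/
def MLRealizes (R : MLNet) (m : List ℕ) : Prop :=
  IsPhylo R.net ∧
  (∀ v, IsLeafN R.net v → R.lab v < m.length) ∧
  (∀ i < m.length, ∀ r, IsRootN R.net r →
      (∑ v ∈ R.net.verts.filter (fun v => IsLeafN R.net v ∧ R.lab v = i),
          nPaths R.net r v) = m.getD i 0)

/-- The arcs of the subgraph induced by the vertices below `c`. -/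
def arcsBelow (G : Net) (c : ℕ) : Set ℕ :=
  {b | b ∈ G.arcs ∧ BelowV G c (G.src b) ∧ BelowV G c (G.tgt b)}

/-- `a` is a cut-arc of `G`: removing it disconnects its end vertices in the
underlying undirected graph. -/
def IsCutArc (G : Net) (a : ℕ) : Prop :=
  a ∈ G.arcs ∧
    ¬ Relation.ReflTransGen
        (fun x y => ∃ b ∈ G.arcs, b ≠ a ∧
          ((G.src b = x ∧ G.tgt b = y) ∨ (G.src b = y ∧ G.tgt b = x)))
        (G.src a) (G.tgt a)

/-- The split operation: `R'` is obtained from `R` by deleting a reticulation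
vertex `h` (with parents `p₁, p₂` and child `c`, where `(h,c)` is a cut-arc)
together with its three incident arcs, making a disjoint copy (via `φ` on vertices
and `ψ` on arcs) of the subgraph induced by the vertices below `c`, and attaching
one copy of `c` to `p₁` by an arc `(p₁,c)` and the other to `p₂` by an arc
`(p₂,c)`. -/
def SplitRel (R R' : MLNet) : Prop :=
  ∃ (h p1 p2 c a0 a1 a2 : ℕ) (φ ψ : ℕ → ℕ),
    IsReticN R.net h ∧
    ArcFT R.net a0 h c ∧ IsCutArc R.net a0 ∧
    ArcFT R.net a1 p1 h ∧ ArcFT R.net a2 p2 h ∧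
    a1 ≠ a2 ∧ a0 ≠ a1 ∧ a0 ≠ a2 ∧
    Set.InjOn φ {w | BelowV R.net c w} ∧
    (∀ w, BelowV R.net c w → φ w ∉ R.net.verts) ∧
    Set.InjOn ψ (arcsBelow R.net c) ∧
    (∀ b ∈ arcsBelow R.net c, ψ b ∉ R.net.arcs) ∧
    (↑R'.net.verts : Set ℕ) =
      ((↑R.net.verts : Set ℕ) \ {h}) ∪ (φ '' {w | BelowV R.net c w}) ∧
    (↑R'.net.arcs : Set ℕ) =
      ((↑R.net.arcs : Set ℕ) \ {a0}) ∪ (ψ '' arcsBelow R.net c) ∧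
    (∀ b ∈ R.net.arcs, b ≠ a0 → b ≠ a1 → b ≠ a2 →
        R'.net.src b = R.net.src b ∧ R'.net.tgt b = R.net.tgt b) ∧
    R'.net.src a1 = p1 ∧ R'.net.tgt a1 = c ∧
    R'.net.src a2 = p2 ∧ R'.net.tgt a2 = φ c ∧
    (∀ b ∈ arcsBelow R.net c,
        R'.net.src (ψ b) = φ (R.net.src b) ∧ R'.net.tgt (ψ b) = φ (R.net.tgt b)) ∧
    (∀ v ∈ R.net.verts, v ≠ h → R'.lab v = R.lab v) ∧
    (∀ w, BelowV R.net c w → R'.lab (φ w) = R.lab w)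

/-- Adjacency in ploidy profile space `𝒫(m)` (relative to an edit distance `D` on
multiple-labelled trees): both endpoints realize `m` and either one is obtained
from the other by a single split operation, or both are multiple-labelled trees at
`D`-distance 1. -/
def PEdge (m : List ℕ) (D : MLNet → MLNet → ℕ) (A B : MLNet) : Prop :=
  MLRealizes A m ∧ MLRealizes B m ∧
    (SplitRel A B ∨ SplitRel B A ∨ (IsMLTree A ∧ IsMLTree B ∧ D A B = 1))

/-!
Pick a reticulation vertex `h` with the fewest vertices below it. No reticulation vertex lies
below its child `c`, so every vertex below `c` has a unique parent; hence `(h, c)` is a cut-arc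
and `h` can be split. The split network is again a phylogenetic network, with one reticulation
vertex fewer. Replacing the new arcs `(p₁, c)` and `(p₂, c')` by `(p₁, h), (h, c)` and
`(p₂, h), (h, c)`, and copied arcs by their originals, maps the root paths of the split network
ending at a vertex `v` or at its copy `v'` bijectively onto the root paths of the original
network ending at `v`. So the number of root paths to leaves with a given label is unchanged,
and induction on the number of reticulation vertices gives a multiple-labelled tree.
-/

section General

variable {G : Net}

theorem IsWalk.append {l₁ l₂ : List ℕ} {u v w : ℕ} (h₁ : IsWalk G l₁ u v)
    (h₂ : IsWalk G l₂ v w) : IsWalk G (l₁ ++ l₂) u w := by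
  induction l₁ generalizing u with
  | nil => obtain ⟨rfl, -⟩ := h₁; simpa
  | cons a t ih => exact ⟨h₁.1, h₁.2.1, ih h₁.2.2⟩

theorem IsWalk.start_mem (hG : IsPhylo G) {l : List ℕ} {u v : ℕ} (h : IsWalk G l u v) :
    u ∈ G.verts := by
  cases l with
  | nil => exact h.2
  | cons a t => exact h.2.1 ▸ hG.src_mem a h.1

theorem IsWalk.end_mem {l : List ℕ} {u v : ℕ} (h : IsWalk G l u v) : v ∈ G.verts := by
  induction l generalizing u with
  | nil => exact h.1 ▸ h.2
  | cons a t ih => exact ih h.2.2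

theorem IsWalk.of_append (hG : IsPhylo G) {l₁ l₂ : List ℕ} {u w : ℕ}
    (h : IsWalk G (l₁ ++ l₂) u w) : ∃ v, IsWalk G l₁ u v ∧ IsWalk G l₂ v w := by
  induction l₁ generalizing u with
  | nil => exact ⟨u, ⟨rfl, h.start_mem hG⟩, h⟩
  | cons a t ih =>
    obtain ⟨v, hv₁, hv₂⟩ := ih h.2.2
    exact ⟨v, ⟨h.1, h.2.1, hv₁⟩, hv₂⟩

theorem IsWalk.end_unique {l : List ℕ} {u v v' : ℕ} (h : IsWalk G l u v)
    (h' : IsWalk G l u v') : v = v' := by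
  induction l generalizing u with
  | nil => exact h.1.symm.trans h'.1
  | cons a t ih => exact ih h.2.2 h'.2.2

theorem IsWalk.mem_arcs {l : List ℕ} {u v : ℕ} (h : IsWalk G l u v) {a : ℕ} (ha : a ∈ l) :
    a ∈ G.arcs := by
  induction l generalizing u with
  | nil => simp at ha
  | cons b t ih =>
    rcases List.mem_cons.mp ha with rfl | ha
    · exact h.1
    · exact ih h.2.2 ha

theorem IsWalk.nodup (hG : IsPhylo G) {l : List ℕ} {u v : ℕ} (h : IsWalk G l u v) :
    l.Nodup := by
  induction l generalizing u with
  | nil => simp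
  | cons a t ih =>
    obtain ⟨ha, hs, ht⟩ := h
    refine List.nodup_cons.2 ⟨fun hmem => ?_, ih ht⟩
    obtain ⟨s, t', rfl⟩ := List.append_of_mem hmem
    obtain ⟨x, hx, -, hsx, -⟩ := ht.of_append hG
    exact hG.acyclic (G.src a) (a :: s) (by simp) ⟨ha, rfl, hsx ▸ hx⟩

theorem finite_setOf_isWalk (hG : IsPhylo G) (u v : ℕ) :
    {l : List ℕ | IsWalk G l u v}.Finite := by
  refine ((List.finite_length_le G.arcs G.arcs.card).image (List.map Subtype.val)).subset ?_
  intro l hl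
  lift l to List G.arcs using fun a ha => hl.mem_arcs ha
  refine ⟨l, ?_, rfl⟩
  have := List.Nodup.length_le_card (hl.nodup hG).of_map
  simpa using this

theorem BelowV.trans {u v w : ℕ} (h₁ : BelowV G u v) (h₂ : BelowV G v w) : BelowV G u w :=
  let ⟨l₁, h₁⟩ := h₁; let ⟨l₂, h₂⟩ := h₂; ⟨l₁ ++ l₂, h₁.append h₂⟩

theorem BelowV.mem {u w : ℕ} (h : BelowV G u w) : w ∈ G.verts :=
  let ⟨_, h⟩ := h; h.end_mem

theorem BelowV.antisymm (hG : IsPhylo G) {u w : ℕ} (h₁ : BelowV G u w) (h₂ : BelowV G w u) :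
    u = w := by
  obtain ⟨l₁, h₁⟩ := h₁
  obtain ⟨l₂, h₂⟩ := h₂
  by_contra hne
  refine hG.acyclic u (l₁ ++ l₂) (fun hnil => hne ?_) (h₁.append h₂)
  obtain ⟨rfl, -⟩ := List.append_eq_nil_iff.mp hnil
  exact h₁.1

theorem nPaths_eq_zero_of_notMem {u v : ℕ} (hv : v ∉ G.verts) : nPaths G u v = 0 := by
  have hempty : {l | IsWalk G l u v} = ∅ :=
    Set.eq_empty_iff_forall_notMem.2 fun _ hl => hv hl.end_mem
  rw [nPaths, hempty, Set.ncard_empty]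

theorem arc_eq_of_inDeg_eq_one {w b b' : ℕ} (hd : inDeg G w = 1)
    (hb : b ∈ G.arcs) (hb' : b' ∈ G.arcs) (ht : G.tgt b = w) (ht' : G.tgt b' = w) : b = b' :=
  Finset.card_le_one.mp hd.le _ (Finset.mem_filter.2 ⟨hb, ht⟩) _
    (Finset.mem_filter.2 ⟨hb', ht'⟩)

theorem inDeg_eq_one_of_unique {w b : ℕ} (hb : b ∈ G.arcs) (ht : G.tgt b = w)
    (huniq : ∀ b' ∈ G.arcs, G.tgt b' = w → b' = b) : inDeg G w = 1 :=
  Finset.card_eq_one.2 ⟨b, Finset.eq_singleton_iff_unique_mem.2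
    ⟨Finset.mem_filter.2 ⟨hb, ht⟩, fun b' hb' => huniq b' (Finset.mem_filter.1 hb').1
      (Finset.mem_filter.1 hb').2⟩⟩

theorem arc_eq_of_outDeg_eq_one {w b b' : ℕ} (hd : outDeg G w = 1)
    (hb : b ∈ G.arcs) (hb' : b' ∈ G.arcs) (hs : G.src b = w) (hs' : G.src b' = w) : b = b' :=
  Finset.card_le_one.mp hd.le _ (Finset.mem_filter.2 ⟨hb, hs⟩) _
    (Finset.mem_filter.2 ⟨hb', hs'⟩)

theorem arc_eq_or_eq_of_inDeg_eq_two {w b a₁ a₂ : ℕ} (hd : inDeg G w = 2)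
    (ha₁ : a₁ ∈ G.arcs) (ha₂ : a₂ ∈ G.arcs) (ht₁ : G.tgt a₁ = w) (ht₂ : G.tgt a₂ = w)
    (hne : a₁ ≠ a₂) (hb : b ∈ G.arcs) (ht : G.tgt b = w) : b = a₁ ∨ b = a₂ := by
  have hsub : ({a₁, a₂} : Finset ℕ) ⊆ G.arcs.filter fun a => G.tgt a = w := by
    simp [Finset.insert_subset_iff, ha₁, ha₂, ht₁, ht₂]
  have heq := (Finset.eq_of_subset_of_card_le hsub (by rw [Finset.card_pair hne]; exact hd.le)).symm
  have hmem : b ∈ G.arcs.filter fun a => G.tgt a = w := Finset.mem_filter.2 ⟨hb, ht⟩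
  simpa [heq] using hmem

open Classical in
noncomputable def reticCard (G : Net) : ℕ := (G.verts.filter fun v => IsReticN G v).card

theorem exists_lowest_retic (hG : IsPhylo G) (hex : ∃ v, IsReticN G v) :
    ∃ h, IsReticN G h ∧ ∀ w, BelowV G h w → w ≠ h → ¬ IsReticN G w := by
  classical
  let below (v : ℕ) : Finset ℕ := G.verts.filter fun w => BelowV G v w
  obtain ⟨v, hv⟩ := hex
  obtain ⟨h, hh, hmin⟩ := (G.verts.filter fun v => IsReticN G v).exists_min_image
    (fun v => (below v).card) ⟨v, Finset.mem_filter.2 ⟨hv.1, hv⟩⟩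
  refine ⟨h, (Finset.mem_filter.1 hh).2, fun w hhw hwh hw => ?_⟩
  have hlt : (below w).card < (below h).card := by
    refine Finset.card_lt_card ⟨fun x hx => ?_, fun hsub => hwh ?_⟩
    · simp only [below, Finset.mem_filter] at hx ⊢
      exact ⟨hx.1, hhw.trans hx.2⟩
    · have hhG := (Finset.mem_filter.1 hh).1
      have : h ∈ below w := hsub (Finset.mem_filter.2 ⟨hhG, ⟨[], rfl, hhG⟩⟩)
      exact (hhw.antisymm hG (Finset.mem_filter.1 this).2).symm
  exact absurd (hmin w (Finset.mem_filter.2 ⟨hw.1, hw⟩)) (not_le.2 hlt)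

end General

structure SplitSite where
  G : Net
  phylo : IsPhylo G
  h : ℕ
  a0 : ℕ
  a1 : ℕ
  a2 : ℕ
  retic : IsReticN G h
  a0_mem : a0 ∈ G.arcs
  src_a0 : G.src a0 = h
  a1_mem : a1 ∈ G.arcs
  tgt_a1 : G.tgt a1 = h
  a2_mem : a2 ∈ G.arcs
  tgt_a2 : G.tgt a2 = h
  a1_ne_a2 : a1 ≠ a2
  not_retic_below : ∀ w, BelowV G (G.tgt a0) w → ¬ IsReticN G w

theorem exists_splitSite {G : Net} (hG : IsPhylo G) (hex : ∃ v, IsReticN G v) :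
    ∃ C : SplitSite, C.G = G := by
  obtain ⟨h, hret, hlow⟩ := exists_lowest_retic hG hex
  obtain ⟨a0, ha0⟩ := Finset.card_eq_one.mp hret.2.2
  have ha0' : a0 ∈ G.arcs.filter fun a => G.src a = h := by
    rw [ha0]; exact Finset.mem_singleton_self a0
  have hin : (G.arcs.filter fun a => G.tgt a = h).card = 2 := hret.2.1
  obtain ⟨a1, ha1, a2, ha2, hne⟩ := Finset.one_lt_card.mp (by rw [hin]; norm_num)
  rw [Finset.mem_filter] at ha0' ha1 ha2
  have hh0 : BelowV G h (G.tgt a0) := ⟨[a0], ha0'.1, ha0'.2, rfl, hG.tgt_mem _ ha0'.1⟩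
  refine ⟨⟨G, hG, h, a0, a1, a2, hret, ha0'.1, ha0'.2, ha1.1, ha1.2, ha2.1, ha2.2, hne,
    fun w hw => hlow w (hh0.trans hw) ?_⟩, rfl⟩
  rintro rfl
  exact hG.no_loop a0 ha0'.1 (ha0'.2.trans (hh0.antisymm hG hw))

namespace SplitSite

variable (C : SplitSite)

def c : ℕ := C.G.tgt C.a0
def p1 : ℕ := C.G.src C.a1
def p2 : ℕ := C.G.src C.a2

theorem c_mem : C.c ∈ C.G.verts := C.phylo.tgt_mem _ C.a0_mem

theorem c_ne_h : C.c ≠ C.h := fun hh => C.phylo.no_loop _ C.a0_mem (C.src_a0.trans hh.symm)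

theorem a1_ne_a0 : C.a1 ≠ C.a0 := fun hh => C.c_ne_h (by rw [c, ← hh, C.tgt_a1])

theorem a2_ne_a0 : C.a2 ≠ C.a0 := fun hh => C.c_ne_h (by rw [c, ← hh, C.tgt_a2])

theorem eq_a0_of_src_eq_h {b : ℕ} (hb : b ∈ C.G.arcs) (hs : C.G.src b = C.h) : b = C.a0 :=
  arc_eq_of_outDeg_eq_one C.retic.2.2 hb C.a0_mem hs C.src_a0

theorem eq_a1_or_a2_of_tgt_eq_h {b : ℕ} (hb : b ∈ C.G.arcs) (ht : C.G.tgt b = C.h) :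
    b = C.a1 ∨ b = C.a2 :=
  arc_eq_or_eq_of_inDeg_eq_two C.retic.2.1 C.a1_mem C.a2_mem C.tgt_a1 C.tgt_a2 C.a1_ne_a2 hb ht

theorem ne_h_of_isRootN {r : ℕ} (hr : IsRootN C.G r) : r ≠ C.h := by
  rintro rfl; exact absurd (C.retic.2.1 ▸ hr.2) two_ne_zero

theorem c_below : BelowV C.G C.c C.c := ⟨[], rfl, C.c_mem⟩

theorem h_not_below : ¬ BelowV C.G C.c C.h := fun ⟨l, hl⟩ =>
  C.phylo.acyclic C.h (C.a0 :: l) (List.cons_ne_nil _ _) ⟨C.a0_mem, C.src_a0, hl⟩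

theorem tgt_below {b : ℕ} (hb : b ∈ C.G.arcs) (hs : BelowV C.G C.c (C.G.src b)) :
    BelowV C.G C.c (C.G.tgt b) :=
  hs.trans ⟨[b], hb, rfl, rfl, C.phylo.tgt_mem _ hb⟩

theorem exists_arc_of_below {w : ℕ} (hw : BelowV C.G C.c w) (hwc : w ≠ C.c) :
    ∃ b ∈ C.G.arcs, C.G.tgt b = w ∧ BelowV C.G C.c (C.G.src b) := by
  obtain ⟨l, hl⟩ := hw
  rcases List.eq_nil_or_concat l with rfl | ⟨L, b, rfl⟩
  · exact absurd hl.1.symm hwc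
  · rw [List.concat_eq_append] at hl
    obtain ⟨x, hx, hb, hsb, htb, -⟩ := hl.of_append C.phylo
    exact ⟨b, hb, htb, hsb ▸ ⟨L, hx⟩⟩

theorem inDeg_of_below {w : ℕ} (hw : BelowV C.G C.c w) : inDeg C.G w = 1 := by
  obtain ⟨b, hb, htb⟩ : ∃ b ∈ C.G.arcs, C.G.tgt b = w := by
    by_cases hwc : w = C.c
    · exact ⟨C.a0, C.a0_mem, hwc.symm⟩
    · obtain ⟨b, hb, htb, -⟩ := C.exists_arc_of_below hw hwc
      exact ⟨b, hb, htb⟩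
  have hpos : 0 < inDeg C.G w := Finset.card_pos.2 ⟨b, Finset.mem_filter.2 ⟨hb, htb⟩⟩
  rcases C.phylo.types w hw.mem with hr | hl | ht | hret
  · exact absurd hr.2 hpos.ne'
  · exact hl.2.1
  · exact ht.2.1
  · exact absurd hret (C.not_retic_below w hw)

theorem eq_a0_of_tgt_eq_c {b : ℕ} (hb : b ∈ C.G.arcs) (ht : C.G.tgt b = C.c) : b = C.a0 :=
  arc_eq_of_inDeg_eq_one (C.inDeg_of_below C.c_below) hb C.a0_mem ht rfl

theorem src_below {b : ℕ} (hb : b ∈ C.G.arcs) (ht : BelowV C.G C.c (C.G.tgt b))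
    (htc : C.G.tgt b ≠ C.c) : BelowV C.G C.c (C.G.src b) := by
  obtain ⟨b', hb', htb', hsb'⟩ := C.exists_arc_of_below ht htc
  rwa [arc_eq_of_inDeg_eq_one (C.inDeg_of_below ht) hb hb' rfl htb']

theorem p1_not_below : ¬ BelowV C.G C.c C.p1 := fun hh =>
  C.h_not_below (C.tgt_a1 ▸ C.tgt_below C.a1_mem hh)

def vShift : ℕ := C.G.verts.sup id + 1
def aShift : ℕ := C.G.arcs.sup id + 1

theorem lt_vShift {v : ℕ} (hv : v ∈ C.G.verts) : v < C.vShift :=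
  Nat.lt_succ_of_le (Finset.le_sup (f := id) hv)

theorem lt_aShift {b : ℕ} (hb : b ∈ C.G.arcs) : b < C.aShift :=
  Nat.lt_succ_of_le (Finset.le_sup (f := id) hb)

/-- The copy of a vertex `w` below `c` is `w + C.vShift` and that of an arc `b` below `c` is
`b + C.aShift`, which are fresh names; `a1` is redirected to `c` and `a2` to the copy of `c`. -/
noncomputable def split : Net :=
  open Classical in
  { verts := C.G.verts.erase C.h ∪ (C.G.verts.filter (BelowV C.G C.c)).image (· + C.vShift)
    arcs := C.G.arcs.erase C.a0 ∪
      (C.G.arcs.filter (· ∈ arcsBelow C.G C.c)).image (· + C.aShift)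
    src := fun b => if C.aShift ≤ b then C.G.src (b - C.aShift) + C.vShift else C.G.src b
    tgt := fun b =>
      if C.aShift ≤ b then C.G.tgt (b - C.aShift) + C.vShift
      else if b = C.a1 then C.c
      else if b = C.a2 then C.c + C.vShift
      else C.G.tgt b }

theorem mem_split_verts {v : ℕ} : v ∈ C.split.verts ↔
    (v ∈ C.G.verts ∧ v ≠ C.h) ∨ ∃ w, BelowV C.G C.c w ∧ v = w + C.vShift := by
  simp only [split, Finset.mem_union, Finset.mem_erase, Finset.mem_image, Finset.mem_filter]
  exact or_congr and_comm ⟨fun ⟨w, hw, he⟩ => ⟨w, hw.2, he.symm⟩,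
    fun ⟨w, hw, he⟩ => ⟨w, ⟨hw.mem, hw⟩, he.symm⟩⟩

theorem mem_split_arcs {b : ℕ} : b ∈ C.split.arcs ↔
    (b ∈ C.G.arcs ∧ b ≠ C.a0) ∨ ∃ b₀ ∈ arcsBelow C.G C.c, b = b₀ + C.aShift := by
  simp only [split, Finset.mem_union, Finset.mem_erase, Finset.mem_image, Finset.mem_filter]
  exact or_congr and_comm ⟨fun ⟨b₀, hb, he⟩ => ⟨b₀, hb.2, he.symm⟩,
    fun ⟨b₀, hb, he⟩ => ⟨b₀, ⟨hb.1, hb⟩, he.symm⟩⟩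

theorem split_src_of_mem {b : ℕ} (hb : b ∈ C.G.arcs) : C.split.src b = C.G.src b :=
  if_neg (not_le.2 (C.lt_aShift hb))

theorem split_src_copy (b : ℕ) : C.split.src (b + C.aShift) = C.G.src b + C.vShift := by
  simp [split]

theorem split_tgt_of_mem {b : ℕ} (hb : b ∈ C.G.arcs) (h1 : b ≠ C.a1) (h2 : b ≠ C.a2) :
    C.split.tgt b = C.G.tgt b := by
  simp [split, C.lt_aShift hb, h1, h2]

theorem split_tgt_a1 : C.split.tgt C.a1 = C.c := by
  simp [split, C.lt_aShift C.a1_mem]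

theorem split_tgt_a2 : C.split.tgt C.a2 = C.c + C.vShift := by
  simp [split, C.lt_aShift C.a2_mem, C.a1_ne_a2.symm]

theorem split_tgt_copy (b : ℕ) : C.split.tgt (b + C.aShift) = C.G.tgt b + C.vShift := by
  simp [split]

theorem inDeg_split_of_mem {v : ℕ} (hv : v ∈ C.G.verts) (hvh : v ≠ C.h) :
    inDeg C.split v = inDeg C.G v := by
  have hvV := C.lt_vShift hv
  by_cases hvc : v = C.c
  · subst hvc
    rw [C.inDeg_of_below C.c_below]
    refine inDeg_eq_one_of_unique (C.mem_split_arcs.2 (.inl ⟨C.a1_mem, C.a1_ne_a0⟩))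
      C.split_tgt_a1 fun b hb ht => ?_
    by_contra h1
    rcases C.mem_split_arcs.1 hb with ⟨hb, h0⟩ | ⟨b₀, -, rfl⟩
    · by_cases h2 : b = C.a2
      · subst h2; rw [split_tgt_a2] at ht; omega
      · exact h0 (C.eq_a0_of_tgt_eq_c hb (C.split_tgt_of_mem hb h1 h2 ▸ ht))
    · rw [split_tgt_copy] at ht; omega
  unfold inDeg
  congr 1
  ext b
  simp only [Finset.mem_filter]
  constructor
  · rintro ⟨hb, ht⟩
    rcases C.mem_split_arcs.1 hb with ⟨hb, -⟩ | ⟨b₀, -, rfl⟩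
    · have h1 : b ≠ C.a1 := by rintro rfl; exact hvc (C.split_tgt_a1 ▸ ht).symm
      have h2 : b ≠ C.a2 := by rintro rfl; rw [split_tgt_a2] at ht; omega
      exact ⟨hb, C.split_tgt_of_mem hb h1 h2 ▸ ht⟩
    · rw [split_tgt_copy] at ht; omega
  · rintro ⟨hb, ht⟩
    have h0 : b ≠ C.a0 := by rintro rfl; exact hvc ht.symm
    have h1 : b ≠ C.a1 := by rintro rfl; exact hvh (ht ▸ C.tgt_a1)
    have h2 : b ≠ C.a2 := by rintro rfl; exact hvh (ht ▸ C.tgt_a2)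
    exact ⟨C.mem_split_arcs.2 (.inl ⟨hb, h0⟩), C.split_tgt_of_mem hb h1 h2 ▸ ht⟩

theorem split_tgt_eq_copy {b w : ℕ} (hb : b ∈ C.split.arcs)
    (ht : C.split.tgt b = w + C.vShift) :
    (b = C.a2 ∧ w = C.c) ∨
      ∃ b₀ ∈ arcsBelow C.G C.c, C.G.tgt b₀ = w ∧ b = b₀ + C.aShift := by
  rcases C.mem_split_arcs.1 hb with ⟨hb, -⟩ | ⟨b₀, hb₀, rfl⟩
  · by_cases h1 : b = C.a1
    · subst h1; rw [split_tgt_a1] at ht; have := C.lt_vShift C.c_mem; omega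
    by_cases h2 : b = C.a2
    · subst h2; rw [split_tgt_a2] at ht; exact .inl ⟨rfl, by omega⟩
    · rw [C.split_tgt_of_mem hb h1 h2] at ht
      have := C.lt_vShift (C.phylo.tgt_mem _ hb); omega
  · rw [split_tgt_copy] at ht
    exact .inr ⟨b₀, hb₀, by omega, rfl⟩

theorem inDeg_split_copy {w : ℕ} (hw : BelowV C.G C.c w) :
    inDeg C.split (w + C.vShift) = 1 := by
  by_cases hwc : w = C.c
  · subst hwc
    refine inDeg_eq_one_of_unique (C.mem_split_arcs.2 (.inl ⟨C.a2_mem, C.a2_ne_a0⟩))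
      C.split_tgt_a2 fun b hb ht => ?_
    rcases C.split_tgt_eq_copy hb ht with ⟨rfl, -⟩ | ⟨b₀, hb₀, ht₀, rfl⟩
    · rfl
    · obtain rfl := C.eq_a0_of_tgt_eq_c hb₀.1 ht₀
      exact absurd (C.src_a0 ▸ hb₀.2.1) C.h_not_below
  · obtain ⟨b₀, hb₀, ht₀, hs₀⟩ := C.exists_arc_of_below hw hwc
    refine inDeg_eq_one_of_unique
      (C.mem_split_arcs.2 (.inr ⟨b₀, ⟨hb₀, hs₀, ht₀ ▸ hw⟩, rfl⟩))
      (by rw [split_tgt_copy, ht₀]) fun b hb ht => ?_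
    rcases C.split_tgt_eq_copy hb ht with ⟨-, rfl⟩ | ⟨b₁, hb₁, ht₁, rfl⟩
    · exact absurd rfl hwc
    · rw [arc_eq_of_inDeg_eq_one (C.inDeg_of_below hw) hb₁.1 hb₀ ht₁ ht₀]

theorem outDeg_split_of_mem {v : ℕ} (hv : v ∈ C.G.verts) (hvh : v ≠ C.h) :
    outDeg C.split v = outDeg C.G v := by
  unfold outDeg
  congr 1
  ext b
  simp only [Finset.mem_filter]
  constructor
  · rintro ⟨hb, hs⟩
    rcases C.mem_split_arcs.1 hb with ⟨hb, -⟩ | ⟨b₀, -, rfl⟩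
    · exact ⟨hb, C.split_src_of_mem hb ▸ hs⟩
    · rw [split_src_copy] at hs; have := C.lt_vShift hv; omega
  · rintro ⟨hb, hs⟩
    have h0 : b ≠ C.a0 := by rintro rfl; exact hvh (hs ▸ C.src_a0)
    exact ⟨C.mem_split_arcs.2 (.inl ⟨hb, h0⟩), C.split_src_of_mem hb ▸ hs⟩

theorem outDeg_split_copy {w : ℕ} (hw : BelowV C.G C.c w) :
    outDeg C.split (w + C.vShift) = outDeg C.G w := by
  refine (congrArg Finset.card ?_).trans
    (Finset.card_image_of_injective _ (add_left_injective C.aShift))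
  ext b
  simp only [Finset.mem_filter, Finset.mem_image]
  constructor
  · rintro ⟨hb, hs⟩
    rcases C.mem_split_arcs.1 hb with ⟨hb, -⟩ | ⟨b₀, hb₀, rfl⟩
    · rw [split_src_of_mem _ hb] at hs; have := C.lt_vShift (C.phylo.src_mem _ hb); omega
    · rw [split_src_copy] at hs
      exact ⟨b₀, ⟨hb₀.1, by omega⟩, rfl⟩
  · rintro ⟨b₀, ⟨hb₀, hs⟩, rfl⟩
    have hsb : BelowV C.G C.c (C.G.src b₀) := hs ▸ hw
    exact ⟨C.mem_split_arcs.2 (.inr ⟨b₀, ⟨hb₀, hsb, C.tgt_below hb₀ hsb⟩, rfl⟩),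
      by rw [split_src_copy, hs]⟩

/-- The walk in `G` traced by an arc of the split network. -/
def unsplitArc (b : ℕ) : List ℕ :=
  if C.aShift ≤ b then [b - C.aShift]
  else if b = C.a1 then [C.a1, C.a0]
  else if b = C.a2 then [C.a2, C.a0]
  else [b]

def unsplitVert (v : ℕ) : ℕ := if C.vShift ≤ v then v - C.vShift else v

theorem unsplitVert_of_mem {v : ℕ} (hv : v ∈ C.G.verts) : C.unsplitVert v = v :=
  if_neg (not_le.2 (C.lt_vShift hv))

theorem unsplitVert_copy (v : ℕ) : C.unsplitVert (v + C.vShift) = v := by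
  simp [unsplitVert]

theorem unsplitArc_of_mem {b : ℕ} (hb : b ∈ C.G.arcs) (h1 : b ≠ C.a1) (h2 : b ≠ C.a2) :
    C.unsplitArc b = [b] := by
  simp [unsplitArc, C.lt_aShift hb, h1, h2]

theorem unsplitArc_a1 : C.unsplitArc C.a1 = [C.a1, C.a0] := by
  simp [unsplitArc, C.lt_aShift C.a1_mem]

theorem unsplitArc_a2 : C.unsplitArc C.a2 = [C.a2, C.a0] := by
  simp [unsplitArc, C.lt_aShift C.a2_mem, C.a1_ne_a2.symm]

theorem unsplitArc_copy (b : ℕ) : C.unsplitArc (b + C.aShift) = [b] := by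
  simp [unsplitArc]

theorem head?_unsplitArc (b : ℕ) :
    (C.unsplitArc b).head? = some (if C.aShift ≤ b then b - C.aShift else b) := by
  unfold unsplitArc
  split_ifs <;> simp_all

theorem unsplitArc_ne_nil (b : ℕ) : C.unsplitArc b ≠ [] := by
  unfold unsplitArc
  split_ifs <;> simp

theorem flatMap_unsplitArc_of_mem {l : List ℕ}
    (hl : ∀ b ∈ l, b ∈ C.G.arcs ∧ b ≠ C.a1 ∧ b ≠ C.a2) :
    l.flatMap C.unsplitArc = l := by
  induction l with
  | nil => rfl
  | cons b t ih =>
    obtain ⟨hb, h1, h2⟩ := hl b List.mem_cons_self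
    rw [List.flatMap_cons, C.unsplitArc_of_mem hb h1 h2,
      ih fun x hx => hl x (List.mem_cons_of_mem _ hx), List.singleton_append]

theorem flatMap_unsplitArc_copy (l : List ℕ) :
    (l.map (· + C.aShift)).flatMap C.unsplitArc = l := by
  induction l with
  | nil => rfl
  | cons b t ih =>
    rw [List.map_cons, List.flatMap_cons, C.unsplitArc_copy, ih, List.singleton_append]

theorem isWalk_unsplit {l : List ℕ} {u w : ℕ} (hl : IsWalk C.split l u w) :
    IsWalk C.G (l.flatMap C.unsplitArc) (C.unsplitVert u) (C.unsplitVert w) := by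
  induction l generalizing u with
  | nil =>
    obtain ⟨rfl, hu⟩ := hl
    refine ⟨rfl, ?_⟩
    rcases C.mem_split_verts.1 hu with ⟨hu, -⟩ | ⟨w, hw, rfl⟩
    · rwa [C.unsplitVert_of_mem hu]
    · rw [C.unsplitVert_copy]; exact hw.mem
  | cons b t ih =>
    obtain ⟨hb, rfl, ht⟩ := hl
    have ih := ih ht
    rw [List.flatMap_cons]
    rcases C.mem_split_arcs.1 hb with ⟨hb, -⟩ | ⟨b₀, hb₀, rfl⟩
    · rw [C.split_src_of_mem hb, C.unsplitVert_of_mem (C.phylo.src_mem _ hb)]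
      by_cases h1 : b = C.a1
      · subst h1
        rw [C.split_tgt_a1, C.unsplitVert_of_mem C.c_mem] at ih
        rw [C.unsplitArc_a1]
        exact ⟨C.a1_mem, rfl, C.a0_mem, C.src_a0.trans C.tgt_a1.symm, ih⟩
      by_cases h2 : b = C.a2
      · subst h2
        rw [C.split_tgt_a2, C.unsplitVert_copy] at ih
        rw [C.unsplitArc_a2]
        exact ⟨C.a2_mem, rfl, C.a0_mem, C.src_a0.trans C.tgt_a2.symm, ih⟩
      · rw [C.split_tgt_of_mem hb h1 h2, C.unsplitVert_of_mem (C.phylo.tgt_mem _ hb)] at ih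
        rw [C.unsplitArc_of_mem hb h1 h2]
        exact ⟨hb, rfl, ih⟩
    · rw [C.split_tgt_copy, C.unsplitVert_copy] at ih
      rw [C.split_src_copy, C.unsplitVert_copy, C.unsplitArc_copy]
      exact ⟨hb₀.1, rfl, ih⟩

theorem split_src_lt_vShift_iff {b : ℕ} (hb : b ∈ C.split.arcs) :
    C.split.src b < C.vShift ↔ b < C.aShift := by
  rcases C.mem_split_arcs.1 hb with ⟨hb, -⟩ | ⟨b₀, -, rfl⟩
  · rw [C.split_src_of_mem hb]
    exact iff_of_true (C.lt_vShift (C.phylo.src_mem _ hb)) (C.lt_aShift hb)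
  · rw [C.split_src_copy]; omega

/-- Unsplitting is injective on walks with a common start: the first arc of a walk is read off
from the head of its image, the side of the shift being fixed by the common source. -/
theorem flatMap_unsplitArc_injective {l l' : List ℕ} {u w w' : ℕ}
    (hl : IsWalk C.split l u w) (hl' : IsWalk C.split l' u w')
    (heq : l.flatMap C.unsplitArc = l'.flatMap C.unsplitArc) : l = l' := by
  induction l generalizing l' u with
  | nil =>
    cases l' with
    | nil => rfl
    | cons b' t' => simp [List.flatMap_cons, C.unsplitArc_ne_nil] at heq
  | cons b t ih =>
    cases l' with
    | nil => simp [List.flatMap_cons, C.unsplitArc_ne_nil] at heq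
    | cons b' t' =>
      rw [List.flatMap_cons, List.flatMap_cons] at heq
      have hbb' : b = b' := by
        have hhead := congrArg List.head? heq
        rw [List.head?_append_of_ne_nil _ (C.unsplitArc_ne_nil b),
          List.head?_append_of_ne_nil _ (C.unsplitArc_ne_nil b'), C.head?_unsplitArc,
          C.head?_unsplitArc, Option.some.injEq] at hhead
        have hside := (C.split_src_lt_vShift_iff hl.1).symm.trans
          ((hl.2.1.trans hl'.2.1.symm) ▸ C.split_src_lt_vShift_iff hl'.1)
        split_ifs at hhead <;> omega
      subst hbb'
      rw [ih hl.2.2 hl'.2.2 (List.append_cancel_left heq)]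

theorem mem_split_verts_of_mem {v : ℕ} (hv : v ∈ C.G.verts) (hvh : v ≠ C.h) :
    v ∈ C.split.verts :=
  C.mem_split_verts.2 (.inl ⟨hv, hvh⟩)

theorem copy_mem_split_verts {w : ℕ} (hw : BelowV C.G C.c w) : w + C.vShift ∈ C.split.verts :=
  C.mem_split_verts.2 (.inr ⟨w, hw, rfl⟩)

theorem copy_mem_split_verts_iff {v : ℕ} :
    v + C.vShift ∈ C.split.verts ↔ BelowV C.G C.c v := by
  refine ⟨fun hmem => ?_, C.copy_mem_split_verts⟩
  rcases C.mem_split_verts.1 hmem with ⟨hv', -⟩ | ⟨w, hw, hwv⟩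
  · exact absurd (C.lt_vShift hv') (by omega)
  · rwa [Nat.add_right_cancel hwv]

theorem isRootN_split_iff {v : ℕ} : IsRootN C.split v ↔ IsRootN C.G v := by
  constructor
  · rintro ⟨hv, hin⟩
    rcases C.mem_split_verts.1 hv with ⟨hv, hvh⟩ | ⟨w, hw, rfl⟩
    · exact ⟨hv, C.inDeg_split_of_mem hv hvh ▸ hin⟩
    · exact absurd (C.inDeg_split_copy hw ▸ hin) one_ne_zero
  · rintro ⟨hv, hin⟩
    have hvh := C.ne_h_of_isRootN ⟨hv, hin⟩
    exact ⟨C.mem_split_verts_of_mem hv hvh, C.inDeg_split_of_mem hv hvh ▸ hin⟩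

theorem split_src_mem {b : ℕ} (hb : b ∈ C.split.arcs) : C.split.src b ∈ C.split.verts := by
  rcases C.mem_split_arcs.1 hb with ⟨hb, h0⟩ | ⟨b₀, hb₀, rfl⟩
  · rw [C.split_src_of_mem hb]
    exact C.mem_split_verts_of_mem (C.phylo.src_mem _ hb) fun hh => h0 (C.eq_a0_of_src_eq_h hb hh)
  · rw [C.split_src_copy]; exact C.copy_mem_split_verts hb₀.2.1

theorem split_tgt_mem {b : ℕ} (hb : b ∈ C.split.arcs) : C.split.tgt b ∈ C.split.verts := by
  rcases C.mem_split_arcs.1 hb with ⟨hb, -⟩ | ⟨b₀, hb₀, rfl⟩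
  · by_cases h1 : b = C.a1
    · subst h1; rw [C.split_tgt_a1]; exact C.mem_split_verts_of_mem C.c_mem C.c_ne_h
    by_cases h2 : b = C.a2
    · subst h2; rw [C.split_tgt_a2]; exact C.copy_mem_split_verts C.c_below
    · rw [C.split_tgt_of_mem hb h1 h2]
      refine C.mem_split_verts_of_mem (C.phylo.tgt_mem _ hb) fun hh => ?_
      rcases C.eq_a1_or_a2_of_tgt_eq_h hb hh with rfl | rfl <;> contradiction
  · rw [C.split_tgt_copy]; exact C.copy_mem_split_verts hb₀.2.2

theorem split_src_ne_tgt {b : ℕ} (hb : b ∈ C.split.arcs) : C.split.src b ≠ C.split.tgt b := by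
  rcases C.mem_split_arcs.1 hb with ⟨hb, -⟩ | ⟨b₀, hb₀, rfl⟩
  · rw [C.split_src_of_mem hb]
    by_cases h1 : b = C.a1
    · subst h1; rw [C.split_tgt_a1]; exact fun hh => C.p1_not_below (hh ▸ C.c_below)
    by_cases h2 : b = C.a2
    · subst h2; rw [C.split_tgt_a2]; have := C.lt_vShift (C.phylo.src_mem _ hb); omega
    · rw [C.split_tgt_of_mem hb h1 h2]; exact C.phylo.no_loop b hb
  · rw [C.split_src_copy, C.split_tgt_copy]
    have := C.phylo.no_loop b₀ hb₀.1
    omega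

theorem isPhylo_split : IsPhylo C.split where
  src_mem _ := C.split_src_mem
  tgt_mem _ := C.split_tgt_mem
  no_loop _ := C.split_src_ne_tgt
  acyclic v l hl hcyc := C.phylo.acyclic _ _
    (fun hnil => hl (List.eq_nil_iff_forall_not_mem.2 fun b hb =>
      C.unsplitArc_ne_nil b (List.flatMap_eq_nil_iff.1 hnil b hb)))
    (C.isWalk_unsplit hcyc)
  root_exu := (existsUnique_congr fun _ => C.isRootN_split_iff).2 C.phylo.root_exu
  root_out r hr := by
    have hr' := C.isRootN_split_iff.1 hr
    rw [C.outDeg_split_of_mem hr'.1 (C.ne_h_of_isRootN hr')]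
    exact C.phylo.root_out r hr'
  types v hv := by
    rcases C.mem_split_verts.1 hv with ⟨hvG, hvh⟩ | ⟨w, hw, rfl⟩
    · have hin := C.inDeg_split_of_mem hvG hvh
      have hout := C.outDeg_split_of_mem hvG hvh
      have := C.phylo.types v hvG
      simp only [IsRootN, IsLeafN, IsTreeVert, IsReticN, hin, hout, hv, hvG, true_and] at this ⊢
      omega
    · have hin := C.inDeg_split_copy hw
      have hout := C.outDeg_split_copy hw
      have hw1 := C.inDeg_of_below hw
      have := C.phylo.types w hw.mem
      simp only [IsRootN, IsLeafN, IsTreeVert, IsReticN, hin, hout, hv, hw.mem, true_and]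
        at this ⊢
      omega

/-- `a1` and `a2` enter `h`, whose only out-arc is `a0`, so such a walk cannot use them. -/
theorem isWalk_split_of_a0_notMem {l : List ℕ} {u w : ℕ} (hl : IsWalk C.G l u w)
    (hw : w ≠ C.h) (h0 : C.a0 ∉ l) :
    IsWalk C.split l u w ∧ ∀ b ∈ l, b ∈ C.G.arcs ∧ b ≠ C.a1 ∧ b ≠ C.a2 := by
  induction l generalizing u with
  | nil => exact ⟨⟨hl.1, C.mem_split_verts_of_mem hl.2 (hl.1 ▸ hw)⟩, by simp⟩
  | cons b t ih =>
    obtain ⟨hb, rfl, ht⟩ := hl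
    have htb : C.G.tgt b ≠ C.h := by
      intro hth
      cases t with
      | nil => exact hw (ht.1 ▸ hth)
      | cons b' t' => exact h0 (C.eq_a0_of_src_eq_h ht.1 (ht.2.1.trans hth) ▸ by simp)
    have h1 : b ≠ C.a1 := by rintro rfl; exact htb C.tgt_a1
    have h2 : b ≠ C.a2 := by rintro rfl; exact htb C.tgt_a2
    obtain ⟨ht', hrest⟩ := ih ht (fun hmem => h0 (List.mem_cons_of_mem _ hmem))
    refine ⟨⟨C.mem_split_arcs.2 (.inl ⟨hb, fun hh => h0 (hh ▸ List.mem_cons_self)⟩),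
      C.split_src_of_mem hb, C.split_tgt_of_mem hb h1 h2 ▸ ht'⟩, ?_⟩
    rintro x (_ | ⟨_, hx⟩)
    · exact ⟨hb, h1, h2⟩
    · exact hrest x hx

theorem a0_notMem_of_below {l : List ℕ} {u w : ℕ} (hl : IsWalk C.G l u w)
    (hu : BelowV C.G C.c u) : C.a0 ∉ l := by
  intro h0
  obtain ⟨s, t, rfl⟩ := List.append_of_mem h0
  obtain ⟨x, hs, -, hx, -⟩ := hl.of_append C.phylo
  exact C.h_not_below (C.src_a0 ▸ hx ▸ hu.trans ⟨s, hs⟩)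

theorem isWalk_split_copy {l : List ℕ} {u w : ℕ} (hl : IsWalk C.G l u w)
    (hu : BelowV C.G C.c u) :
    IsWalk C.split (l.map (· + C.aShift)) (u + C.vShift) (w + C.vShift) := by
  induction l generalizing u with
  | nil => exact ⟨congrArg (· + C.vShift) hl.1, C.copy_mem_split_verts hu⟩
  | cons b t ih =>
    obtain ⟨hb, rfl, ht⟩ := hl
    have htb := C.tgt_below hb hu
    exact ⟨C.mem_split_arcs.2 (.inr ⟨b, ⟨hb, hu, htb⟩, rfl⟩), C.split_src_copy b,
      C.split_tgt_copy b ▸ ih ht htb⟩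

/-- A walk through `h` enters it by `a1` or `a2`; it is traced through `c` in the first case and
through the copy of `c` in the second. -/
theorem exists_split_walk {l : List ℕ} {u v : ℕ} (hl : IsWalk C.G l u v) (hu : u ≠ C.h)
    (hv : v ≠ C.h) : ∃ l', (IsWalk C.split l' u v ∨ IsWalk C.split l' u (v + C.vShift)) ∧
      l'.flatMap C.unsplitArc = l := by
  by_cases h0 : C.a0 ∈ l
  swap
  · obtain ⟨hl', hmem⟩ := C.isWalk_split_of_a0_notMem hl hv h0
    exact ⟨l, .inl hl', C.flatMap_unsplitArc_of_mem hmem⟩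
  obtain ⟨s, t, rfl⟩ := List.append_of_mem h0
  have hnd := hl.nodup C.phylo
  obtain ⟨x, hs, -, hx, ht⟩ := hl.of_append C.phylo
  rw [C.src_a0] at hx
  subst hx
  obtain ⟨L, b, rfl⟩ := (List.eq_nil_or_concat s).resolve_left (by rintro rfl; exact hu hs.1)
  rw [List.concat_eq_append] at hs hnd ⊢
  obtain ⟨y, hL, hb, rfl, htb, -⟩ := hs.of_append C.phylo
  have hL0 : C.a0 ∉ L := fun hmem =>
    List.disjoint_of_nodup_append hnd (List.mem_append_left _ hmem) List.mem_cons_self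
  have hy : C.G.src b ≠ C.h := htb ▸ C.phylo.no_loop b hb
  obtain ⟨hL', hLmem⟩ := C.isWalk_split_of_a0_notMem hL hy hL0
  obtain ⟨ht', htmem⟩ := C.isWalk_split_of_a0_notMem ht hv (C.a0_notMem_of_below ht C.c_below)
  rcases C.eq_a1_or_a2_of_tgt_eq_h hb htb with rfl | rfl
  · refine ⟨L ++ C.a1 :: t, .inl (hL'.append ⟨C.mem_split_arcs.2 (.inl ⟨hb, C.a1_ne_a0⟩),
      C.split_src_of_mem hb, C.split_tgt_a1 ▸ ht'⟩), ?_⟩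
    simp [C.unsplitArc_a1, C.flatMap_unsplitArc_of_mem hLmem, C.flatMap_unsplitArc_of_mem htmem]
  · refine ⟨L ++ C.a2 :: t.map (· + C.aShift), .inr (hL'.append ⟨C.mem_split_arcs.2
      (.inl ⟨hb, C.a2_ne_a0⟩), C.split_src_of_mem hb,
        C.split_tgt_a2 ▸ C.isWalk_split_copy ht C.c_below⟩), ?_⟩
    simp [C.unsplitArc_a2, C.flatMap_unsplitArc_of_mem hLmem, C.flatMap_unsplitArc_copy]

theorem nPaths_eq_nPaths_split_add {u v : ℕ} (hu : u ∈ C.G.verts) (huh : u ≠ C.h)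
    (hv : v ∈ C.G.verts) (hvh : v ≠ C.h) :
    nPaths C.G u v = nPaths C.split u v + nPaths C.split u (v + C.vShift) := by
  set W₁ := {l | IsWalk C.split l u v}
  set W₂ := {l | IsWalk C.split l u (v + C.vShift)}
  have himage : (·.flatMap C.unsplitArc) '' (W₁ ∪ W₂) = {l | IsWalk C.G l u v} := by
    ext l
    constructor
    · rintro ⟨l', hl' | hl', rfl⟩
      · simpa [C.unsplitVert_of_mem hu, C.unsplitVert_of_mem hv] using C.isWalk_unsplit hl'
      · simpa [C.unsplitVert_of_mem hu, C.unsplitVert_copy] using C.isWalk_unsplit hl'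
    · intro hl
      exact C.exists_split_walk hl huh hvh
  have hinj : Set.InjOn (·.flatMap C.unsplitArc) (W₁ ∪ W₂) := by
    rintro l (hl | hl) l' (hl' | hl') heq <;> exact C.flatMap_unsplitArc_injective hl hl' heq
  have hdisj : Disjoint W₁ W₂ := Set.disjoint_left.2 fun l h₁ h₂ => by
    have := h₁.end_unique h₂
    have := C.lt_vShift hv
    omega
  rw [nPaths, ← himage, hinj.ncard_image, Set.ncard_union_eq hdisj
    (finite_setOf_isWalk C.isPhylo_split _ _) (finite_setOf_isWalk C.isPhylo_split _ _)]
  rfl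

theorem isReticN_split_iff {v : ℕ} : IsReticN C.split v ↔ v ≠ C.h ∧ IsReticN C.G v := by
  constructor
  · rintro ⟨hv, hin, hout⟩
    rcases C.mem_split_verts.1 hv with ⟨hv, hvh⟩ | ⟨w, hw, rfl⟩
    · exact ⟨hvh, hv, C.inDeg_split_of_mem hv hvh ▸ hin,
        C.outDeg_split_of_mem hv hvh ▸ hout⟩
    · exact absurd (C.inDeg_split_copy hw ▸ hin) (by decide)
  · rintro ⟨hvh, hv, hin, hout⟩
    exact ⟨C.mem_split_verts_of_mem hv hvh, C.inDeg_split_of_mem hv hvh ▸ hin,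
      C.outDeg_split_of_mem hv hvh ▸ hout⟩

theorem reticCard_split_lt : reticCard C.split < reticCard C.G := by
  classical
  unfold reticCard
  calc (C.split.verts.filter fun v => IsReticN C.split v).card
      ≤ ((C.G.verts.filter fun v => IsReticN C.G v).erase C.h).card := by
        refine Finset.card_le_card fun v hv => ?_
        obtain ⟨hvh, hv⟩ := C.isReticN_split_iff.1 (Finset.mem_filter.1 hv).2
        exact Finset.mem_erase.2 ⟨hvh, Finset.mem_filter.2 ⟨hv.1, hv⟩⟩
    _ < _ := Finset.card_erase_lt_of_mem (Finset.mem_filter.2 ⟨C.retic.1, C.retic⟩)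

theorem isLeafN_split_iff_of_mem {v : ℕ} (hv : v ∈ C.G.verts) (hvh : v ≠ C.h) :
    IsLeafN C.split v ↔ IsLeafN C.G v := by
  simp only [IsLeafN, C.inDeg_split_of_mem hv hvh, C.outDeg_split_of_mem hv hvh, hv,
    C.mem_split_verts_of_mem hv hvh]

theorem isLeafN_split_copy_iff {w : ℕ} (hw : BelowV C.G C.c w) :
    IsLeafN C.split (w + C.vShift) ↔ IsLeafN C.G w := by
  simp only [IsLeafN, C.inDeg_split_copy hw, C.outDeg_split_copy hw, C.inDeg_of_below hw,
    hw.mem, C.copy_mem_split_verts hw]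

theorem h_not_isLeafN : ¬ IsLeafN C.G C.h := fun hh => absurd (C.retic.2.2 ▸ hh.2.2) one_ne_zero

/-- Everything connected to `h` without using `a0` stays outside the part below `c`, since an
arc entering a vertex below `c` other than `c` starts below `c`. -/
theorem isCutArc_a0 : IsCutArc C.G C.a0 := by
  refine ⟨C.a0_mem, fun hconn => ?_⟩
  suffices ∀ x, Relation.ReflTransGen (fun x y => ∃ b ∈ C.G.arcs, b ≠ C.a0 ∧
      ((C.G.src b = x ∧ C.G.tgt b = y) ∨ (C.G.src b = y ∧ C.G.tgt b = x)))
      (C.G.src C.a0) x → ¬ BelowV C.G C.c x from this _ hconn C.c_below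
  intro x hx
  induction hx with
  | refl => rw [C.src_a0]; exact C.h_not_below
  | tail _ hstep ih =>
    obtain ⟨b, hb, hb0, ⟨rfl, rfl⟩ | ⟨rfl, rfl⟩⟩ := hstep
    · intro hbelow
      by_cases htc : C.G.tgt b = C.c
      · exact hb0 (C.eq_a0_of_tgt_eq_c hb htc)
      · exact ih (C.src_below hb hbelow htc)
    · exact fun hbelow => ih (C.tgt_below hb hbelow)

noncomputable def splitML (lab : ℕ → ℕ) : MLNet := ⟨C.split, lab ∘ C.unsplitVert⟩

theorem splitRel_splitML (lab : ℕ → ℕ) : SplitRel ⟨C.G, lab⟩ (C.splitML lab) := by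
  refine ⟨C.h, C.p1, C.p2, C.c, C.a0, C.a1, C.a2, (· + C.vShift), (· + C.aShift), C.retic,
    ⟨C.a0_mem, C.src_a0, rfl⟩, C.isCutArc_a0, ⟨C.a1_mem, rfl, C.tgt_a1⟩,
    ⟨C.a2_mem, rfl, C.tgt_a2⟩, C.a1_ne_a2, C.a1_ne_a0.symm, C.a2_ne_a0.symm,
    (add_left_injective _).injOn, fun w _ hw => (C.lt_vShift hw).not_ge (Nat.le_add_left _ _),
    (add_left_injective _).injOn, fun b _ hb => (C.lt_aShift hb).not_ge (Nat.le_add_left _ _),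
    ?_, ?_, fun b hb _ h1 h2 => ⟨C.split_src_of_mem hb, C.split_tgt_of_mem hb h1 h2⟩,
    C.split_src_of_mem C.a1_mem, C.split_tgt_a1, C.split_src_of_mem C.a2_mem, C.split_tgt_a2,
    fun b _ => ⟨C.split_src_copy b, C.split_tgt_copy b⟩,
    fun v hv _ => congrArg lab (C.unsplitVert_of_mem hv),
    fun w _ => congrArg lab (C.unsplitVert_copy w)⟩
  · ext v
    simp [splitML, C.mem_split_verts, eq_comm]
  · ext b
    simp [splitML, C.mem_split_arcs, eq_comm]

open Classical in
theorem filter_isLeafN_split (lab : ℕ → ℕ) (i : ℕ) :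
    C.split.verts.filter (fun v => IsLeafN C.split v ∧ lab (C.unsplitVert v) = i) =
      C.G.verts.filter (fun v => IsLeafN C.G v ∧ lab v = i) ∪
        ((C.G.verts.filter (fun v => IsLeafN C.G v ∧ lab v = i)).filter
          (BelowV C.G C.c)).image (· + C.vShift) := by
  ext v
  simp only [Finset.mem_filter, Finset.mem_union, Finset.mem_image]
  constructor
  · rintro ⟨hv, hleaf, hlab⟩
    rcases C.mem_split_verts.1 hv with ⟨hv, hvh⟩ | ⟨w, hw, rfl⟩
    · rw [C.unsplitVert_of_mem hv] at hlab
      exact .inl ⟨hv, (C.isLeafN_split_iff_of_mem hv hvh).1 hleaf, hlab⟩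
    · rw [C.unsplitVert_copy] at hlab
      exact .inr ⟨w, ⟨⟨hw.mem, (C.isLeafN_split_copy_iff hw).1 hleaf, hlab⟩, hw⟩, rfl⟩
  · rintro (⟨hv, hleaf, hlab⟩ | ⟨w, ⟨⟨-, hleaf, hlab⟩, hw⟩, rfl⟩)
    · have hvh : v ≠ C.h := by rintro rfl; exact C.h_not_isLeafN hleaf
      exact ⟨C.mem_split_verts_of_mem hv hvh, (C.isLeafN_split_iff_of_mem hv hvh).2 hleaf,
        by rw [C.unsplitVert_of_mem hv, hlab]⟩
    · exact ⟨C.copy_mem_split_verts hw, (C.isLeafN_split_copy_iff hw).2 hleaf,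
        by rw [C.unsplitVert_copy, hlab]⟩

theorem sum_nPaths_split (lab : ℕ → ℕ) (i : ℕ) {r : ℕ} (hr : IsRootN C.G r) :
    ∑ v ∈ C.split.verts.filter (fun v => IsLeafN C.split v ∧ lab (C.unsplitVert v) = i),
        nPaths C.split r v =
      ∑ v ∈ C.G.verts.filter (fun v => IsLeafN C.G v ∧ lab v = i), nPaths C.G r v := by
  classical
  set S := C.G.verts.filter (fun v => IsLeafN C.G v ∧ lab v = i)
  have hdisj : Disjoint S ((S.filter (BelowV C.G C.c)).image (· + C.vShift)) := by
    refine Finset.disjoint_left.2 fun v hv hv' => ?_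
    obtain ⟨w, -, rfl⟩ := Finset.mem_image.1 hv'
    have := C.lt_vShift (Finset.mem_filter.1 hv).1
    omega
  have hcopies : ∑ v ∈ S.filter (BelowV C.G C.c), nPaths C.split r (v + C.vShift) =
      ∑ v ∈ S, nPaths C.split r (v + C.vShift) :=
    Finset.sum_filter_of_ne fun _ _ hne =>
      C.copy_mem_split_verts_iff.1 (not_not.1 fun hmem => hne (nPaths_eq_zero_of_notMem hmem))
  rw [C.filter_isLeafN_split, Finset.sum_union hdisj,
    Finset.sum_image fun _ _ _ _ h => Nat.add_right_cancel h, hcopies, ← Finset.sum_add_distrib]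
  refine Finset.sum_congr rfl fun v hv => ?_
  obtain ⟨hv, hleaf, -⟩ := Finset.mem_filter.1 hv
  exact (C.nPaths_eq_nPaths_split_add hr.1 (C.ne_h_of_isRootN hr) hv
    fun hvh => C.h_not_isLeafN (hvh ▸ hleaf)).symm

theorem mlRealizes_splitML {lab : ℕ → ℕ} {m : List ℕ} (hR : MLRealizes ⟨C.G, lab⟩ m) :
    MLRealizes (C.splitML lab) m := by
  obtain ⟨-, hlab, hsum⟩ := hR
  refine ⟨C.isPhylo_split, fun v hleaf => ?_, fun i hi r hr => ?_⟩
  · rcases C.mem_split_verts.1 hleaf.1 with ⟨hv, hvh⟩ | ⟨w, hw, rfl⟩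
    · simpa [splitML, C.unsplitVert_of_mem hv] using
        hlab v ((C.isLeafN_split_iff_of_mem hv hvh).1 hleaf)
    · simpa [splitML, C.unsplitVert_copy] using hlab w ((C.isLeafN_split_copy_iff hw).1 hleaf)
  · have hr := C.isRootN_split_iff.1 hr
    exact (C.sum_nPaths_split lab i hr).trans (hsum i hi r hr)

end SplitSite

theorem exists_splitRel_of_isReticN {R : MLNet} {m : List ℕ} (hR : MLRealizes R m)
    (hex : ∃ v, IsReticN R.net v) :
    ∃ R', SplitRel R R' ∧ MLRealizes R' m ∧ reticCard R'.net < reticCard R.net := by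
  obtain ⟨C, hC⟩ := exists_splitSite hR.1 hex
  obtain ⟨G, lab⟩ := R
  subst hC
  exact ⟨C.splitML lab, C.splitRel_splitML lab, C.mlRealizes_splitML hR, C.reticCard_split_lt⟩

theorem splits_reach_tree_general (m : List ℕ)
    (N : MLNet) (hN : MLRealizes N m) :
    ∃ T : MLNet, Relation.ReflTransGen SplitRel N T ∧ IsMLTree T ∧
      MLRealizes T m := by
  induction hn : reticCard N.net using Nat.strong_induction_on generalizing N with
  | _ n ih =>
    by_cases hex : ∃ v, IsReticN N.net v
    · obtain ⟨R, hsplit, hR, hlt⟩ := exists_splitRel_of_isReticN hN hex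
      obtain ⟨T, hRT, hT, hTm⟩ := ih _ (hn ▸ hlt) R hR rfl
      exact ⟨T, .head hsplit hRT, hT, hTm⟩
    · exact ⟨N, .refl, fun v hv => hex ⟨v, hv⟩, hN⟩

/-- Every multiple-labelled network realizing a ploidy profile
`m` can be transformed by a finite sequence of split operations into a
multiple-labelled tree realizing `m`. -/
theorem splits_reach_tree (m : List ℕ) (hm : IsProfileL m)
    (N : MLNet) (hN : MLRealizes N m) :
    ∃ T : MLNet, Relation.ReflTransGen SplitRel N T ∧ IsMLTree T ∧
      MLRealizes T m :=
  splits_reach_tree_general m N hN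

end Ploidy
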